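/- Let 𝐆 = (G,T) be a projective pile, let N be a closed normal subgroup of G, and let Ñ be the closed subgroup of G generated by ⋃_{t ∈ T} (N ∩ G_t) (which is normal in G). Then the quotient pile (G/Ñ, T/Ñ), where T/Ñ is the orbit space of the Ñ-action on T with the induced continuous G/Ñ-action, is projective. -/

import Mathlib

open Pointwise

/-- A pile `(G,T)`: a profinite group `G`, a profinite space `T`, and a continuous action
of `G` on `T`. -/
structure Pile : Type 1 where
  G : Type
  T : Type
  [grp : Group G]
  [topG : TopologicalSpace G]
  [tgG : IsTopologicalGroup G]
  [cG : CompactSpace G]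
  [h2G : T2Space G]
  [tdG : TotallyDisconnectedSpace G]
  [topT : TopologicalSpace T]
  [cT : CompactSpace T]
  [h2T : T2Space T]
  [tdT : TotallyDisconnectedSpace T]
  [act : MulAction G T]
  [csmul : ContinuousSMul G T]

attribute [instance] Pile.grp Pile.topG Pile.tgG Pile.cG Pile.h2G Pile.tdG
  Pile.topT Pile.cT Pile.h2T Pile.tdT Pile.act Pile.csmul

/-- A pile is finite if both its group and its space are finite. -/
def Pile.IsFinite (P : Pile) : Prop := Finite P.G ∧ Finite P.T

/-- A morphism of piles: a continuous group homomorphism together with a continuous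
equivariant map of the spaces. -/
structure PileHom (P Q : Pile) where
  toGrp : P.G →* Q.G
  contGrp : Continuous toGrp
  toSp : P.T → Q.T
  contSp : Continuous toSp
  equivariant : ∀ (g : P.G) (t : P.T), toSp (g • t) = toGrp g • toSp t

/-- Composition of pile morphisms. -/
def PileHom.comp {P Q R : Pile} (g : PileHom Q R) (f : PileHom P Q) : PileHom P R where
  toGrp := g.toGrp.comp f.toGrp
  contGrp := g.contGrp.comp f.contGrp
  toSp := g.toSp ∘ f.toSp
  contSp := g.contSp.comp f.contSp
  equivariant := fun a t => by
    simp [Function.comp, f.equivariant, g.equivariant]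

/-- A pile morphism is an epimorphism if it is surjective on groups and spaces and for
every point `x` of the target space there is a point `y` above it whose stabilizer maps
onto the stabilizer of `x`. -/
def PileHom.IsEpi {P Q : Pile} (f : PileHom P Q) : Prop :=
  Function.Surjective f.toGrp ∧ Function.Surjective f.toSp ∧
  ∀ x : Q.T, ∃ y : P.T, f.toSp y = x ∧
    (MulAction.stabilizer P.G y).map f.toGrp = MulAction.stabilizer Q.G x

/-- The induced map of orbit spaces. -/
def PileHom.orbitMap {P Q : Pile} (f : PileHom P Q) :
    Quotient (MulAction.orbitRel P.G P.T) → Quotient (MulAction.orbitRel Q.G Q.T) :=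
  Quotient.lift (fun t => Quotient.mk (MulAction.orbitRel Q.G Q.T) (f.toSp t))
    (fun t₁ t₂ h => Quotient.sound (by
      obtain ⟨g, hg⟩ := MulAction.mem_orbit_iff.mp h
      exact MulAction.mem_orbit_iff.mpr ⟨f.toGrp g, by rw [← hg, f.equivariant]⟩))

/-- A pile morphism is a rigid epimorphism if it is an epimorphism, maps each point
stabilizer isomorphically onto the stabilizer of the image point, and induces a
homeomorphism of the orbit spaces. -/
def PileHom.IsRigid {P Q : Pile} (f : PileHom P Q) : Prop :=
  f.IsEpi ∧
  (∀ y : P.T, Set.InjOn f.toGrp (MulAction.stabilizer P.G y) ∧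
    (MulAction.stabilizer P.G y).map f.toGrp = MulAction.stabilizer Q.G (f.toSp y)) ∧
  IsHomeomorph f.orbitMap

/-- A pile is projective if every finite embedding problem for it (a morphism `φ : 𝐆 → 𝐀`
together with a rigid epimorphism `α : 𝐁 → 𝐀` with `𝐁` a finite pile) has a solution. -/
def Pile.IsProjective (P : Pile) : Prop :=
  ∀ (A B : Pile), B.IsFinite →
    ∀ (φ : PileHom P A) (α : PileHom B A), α.IsRigid →
      ∃ γ : PileHom P B, α.comp γ = φ


private lemma PileHom.ext' {P Q : Pile} {f g : PileHom P Q} (h1 : f.toGrp = g.toGrp)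
    (h2 : f.toSp = g.toSp) : f = g := by
  cases f; cases g; cases h1; cases h2; rfl

/-- Let `(G,T)` be a projective pile, `N` a closed normal subgroup of `G`, and `Ñ` the
closed subgroup of `G` generated by `⋃_t (N ∩ G_t)`. Then the quotient pile `(G/Ñ, T/Ñ)`
(here realized as a pile `Q` together with a morphism of piles `π : (G,T) → Q` whose group
component is surjective with kernel `Ñ` and whose space component is surjective with fibers
exactly the `Ñ`-orbits) is projective. -/
theorem quotient_pile_mod_tilde_projective
    (P : Pile) (hP : P.IsProjective)
    (N : Subgroup P.G) (hNn : N.Normal) (hNc : IsClosed (N : Set P.G))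
    (Q : Pile) (π : PileHom P Q)
    (hsurjG : Function.Surjective π.toGrp)
    (hker : π.toGrp.ker =
      (Subgroup.closure (⋃ t : P.T,
        (N : Set P.G) ∩ (MulAction.stabilizer P.G t : Set P.G))).topologicalClosure)
    (hsurjT : Function.Surjective π.toSp)
    (hfib : ∀ t t' : P.T, π.toSp t = π.toSp t' ↔ ∃ n ∈ π.toGrp.ker, n • t = t') :
    Q.IsProjective := by
  intro A B hB φ α hα
  obtain ⟨γ, hγ⟩ := hP A B hB (φ.comp π) α hα
  have hγG : ∀ g, α.toGrp (γ.toGrp g) = φ.toGrp (π.toGrp g) := fun g =>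
    congrArg (fun f : PileHom P A => f.toGrp g) hγ
  have hγT : ∀ t, α.toSp (γ.toSp t) = φ.toSp (π.toSp t) := fun t =>
    congrArg (fun f : PileHom P A => f.toSp t) hγ
  have hBfin : Finite B.G := hB.1
  have hkerclosed : IsClosed (γ.toGrp.ker : Set P.G) := by
    have h1 : IsClosed ({1} : Set B.G) := isClosed_singleton
    exact h1.preimage γ.contGrp
  -- ker π ≤ ker γ
  have hkerπ : π.toGrp.ker ≤ γ.toGrp.ker := by
    rw [hker]
    have hsub : Subgroup.closure (⋃ t : P.T,
        (N : Set P.G) ∩ (MulAction.stabilizer P.G t : Set P.G)) ≤ γ.toGrp.ker := by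
      rw [Subgroup.closure_le]
      rintro g hg
      obtain ⟨s, ⟨t, rfl⟩, hgN, hgt⟩ := hg
      have hgπ : g ∈ π.toGrp.ker := by
        rw [hker]
        exact Subgroup.le_topologicalClosure _
          (Subgroup.subset_closure (Set.mem_iUnion.mpr ⟨t, hgN, hgt⟩))
      have hαγ : α.toGrp (γ.toGrp g) = 1 := by
        rw [hγG, show π.toGrp g = 1 from hgπ, map_one]
      have hst : g • t = t := hgt
      have hstab : γ.toGrp g ∈ MulAction.stabilizer B.G (γ.toSp t) := by
        have := γ.equivariant g t
        rw [hst] at this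
        exact (MulAction.mem_stabilizer_iff).mpr this.symm
      have hone : (1 : B.G) ∈ MulAction.stabilizer B.G (γ.toSp t) := one_mem _
      have := (hα.2.1 (γ.toSp t)).1 hstab hone (by rw [hαγ, map_one])
      simpa [MonoidHom.mem_ker] using this
    exact Subgroup.topologicalClosure_minimal _ hsub hkerclosed
  have keyG : ∀ g g', π.toGrp g = π.toGrp g' → γ.toGrp g = γ.toGrp g' := by
    intro g g' h
    have h1 : g⁻¹ * g' ∈ π.toGrp.ker := by
      rw [MonoidHom.mem_ker, map_mul, map_inv, h, inv_mul_cancel]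
    have h2 : γ.toGrp (g⁻¹ * g') = 1 := hkerπ h1
    rw [map_mul, map_inv] at h2
    exact (eq_of_inv_mul_eq_one h2).symm ▸ rfl
  have keyT : ∀ t t', π.toSp t = π.toSp t' → γ.toSp t = γ.toSp t' := by
    intro t t' h
    obtain ⟨n, hn, hnt⟩ := (hfib t t').mp h
    have hn1 : γ.toGrp n = 1 := hkerπ hn
    rw [← hnt, γ.equivariant, hn1, one_smul]
  set sG := Function.surjInv hsurjG with hsGdef
  have hsG : ∀ q, π.toGrp (sG q) = q := Function.surjInv_eq hsurjG
  set sT := Function.surjInv hsurjT with hsTdef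
  have hsT : ∀ x, π.toSp (sT x) = x := Function.surjInv_eq hsurjT
  have hδπ : ∀ g, γ.toGrp (sG (π.toGrp g)) = γ.toGrp g := fun g => keyG _ _ (hsG _)
  have hσπ : ∀ t, γ.toSp (sT (π.toSp t)) = γ.toSp t := fun t => keyT _ _ (hsT _)
  let δ : Q.G →* B.G :=
    { toFun := fun q => γ.toGrp (sG q)
      map_one' := by
        have : γ.toGrp (sG (π.toGrp 1)) = γ.toGrp 1 := hδπ 1
        simpa using this
      map_mul' := fun q r => by
        have h1 : π.toGrp (sG q * sG r) = q * r := by rw [map_mul, hsG, hsG]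
        calc γ.toGrp (sG (q * r)) = γ.toGrp (sG q * sG r) := keyG _ _ (by rw [h1, hsG])
          _ = γ.toGrp (sG q) * γ.toGrp (sG r) := map_mul _ _ _ }
  have hqmG : Topology.IsQuotientMap π.toGrp :=
    (π.contGrp.isClosedMap).isQuotientMap π.contGrp hsurjG
  have hqmT : Topology.IsQuotientMap π.toSp :=
    (π.contSp.isClosedMap).isQuotientMap π.contSp hsurjT
  have hcδ : Continuous δ := by
    rw [hqmG.continuous_iff]
    have : (⇑δ ∘ ⇑π.toGrp) = ⇑γ.toGrp := funext fun g => hδπ g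
    rw [this]; exact γ.contGrp
  have hcσ : Continuous (fun x => γ.toSp (sT x)) := by
    rw [hqmT.continuous_iff]
    have : ((fun x => γ.toSp (sT x)) ∘ π.toSp) = γ.toSp := funext fun t => hσπ t
    rw [this]; exact γ.contSp
  have hequiv : ∀ (q : Q.G) (x : Q.T),
      γ.toSp (sT (q • x)) = δ q • γ.toSp (sT x) := by
    intro q x
    have h1 : q • x = π.toSp (sG q • sT x) := by rw [π.equivariant, hsG, hsT]
    have h2 : γ.toSp (sT (q • x)) = γ.toSp (sG q • sT x) := by rw [h1, hσπ]
    rw [h2, γ.equivariant]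
    rfl
  refine ⟨{ toGrp := δ, contGrp := hcδ, toSp := fun x => γ.toSp (sT x),
            contSp := hcσ, equivariant := hequiv }, ?_⟩
  apply PileHom.ext'
  · ext q
    show α.toGrp (γ.toGrp (sG q)) = φ.toGrp q
    rw [hγG, hsG]
  · funext x
    show α.toSp (γ.toSp (sT x)) = φ.toSp x
    rw [hγT, hsT]
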